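/- arXiv:2007.10673 — 2 statements merged into one kernel-verified Lean document; each statement's English description precedes it below -/
import Mathlib

section
/- Let n ≥ 64 and let Q ∈ ℝ_{≥0}^{n×n} be a nonnegative matrix with Q(i,i) = 0 for all i, Q(i,j) > 0 for all i ≠ j, and nonnegative rank rank₊(Q) ≥ 2√n − 2. Then for every integer k ≥ 2: if Q^{⊗k} = Σ_{l=1}^{r} P_l, where each P_l is a nonnegative matrix with PSD-rank prank(P_l) ≤ 2^{k−1}, then r ≥ log₂ n. -/
open Matrix BigOperators Kronecker
open scoped ComplexOrder

/-- `P` admits a PSD factorization of size `r`: there are `r × r` complex positive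
semidefinite matrices `C i` (one per row index) and `D j` (one per column index) with
`P i j = tr (C i * D j)`. -/
def HasPsdFac {α β : Type} [Fintype α] [Fintype β] (P : Matrix α β ℝ) (r : ℕ) : Prop :=
  ∃ (C : α → Matrix (Fin r) (Fin r) ℂ) (D : β → Matrix (Fin r) (Fin r) ℂ),
    (∀ i, (C i).PosSemidef) ∧ (∀ j, (D j).PosSemidef) ∧
      ∀ i j, (P i j : ℂ) = ((C i) * (D j)).trace

/-- The PSD-rank of a nonnegative matrix: the least size of a PSD factorization. -/
noncomputable def prank {α β : Type} [Fintype α] [Fintype β] (P : Matrix α β ℝ) : ℕ :=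
  sInf {r | HasPsdFac P r}

/-- `P` admits a `k`-block PSD factorization of size `r`: there are `k × k` complex
positive semidefinite matrices `C i l`, `D j l` (`l ∈ [r]`) with
`P i j = ∑ l, tr (C i l * D j l)`. -/
def HasBlockPsdFac {α β : Type} [Fintype α] [Fintype β] (k : ℕ)
    (P : Matrix α β ℝ) (r : ℕ) : Prop :=
  ∃ (C : α → Fin r → Matrix (Fin k) (Fin k) ℂ)
    (D : β → Fin r → Matrix (Fin k) (Fin k) ℂ),
    (∀ i l, (C i l).PosSemidef) ∧ (∀ j l, (D j l).PosSemidef) ∧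
      ∀ i j, (P i j : ℂ) = ∑ l, ((C i l) * (D j l)).trace

/-- The `k`-block PSD rank of a nonnegative matrix:
the least size of a `k`-block PSD factorization. -/
noncomputable def kprank {α β : Type} [Fintype α] [Fintype β] (k : ℕ)
    (P : Matrix α β ℝ) : ℕ :=
  sInf {r | HasBlockPsdFac k P r}

/-- The nonnegative rank of a nonnegative matrix: the least `r` such that `P` is a sum
of `r` nonnegative rank-one matrices (outer products of nonnegative vectors). -/
noncomputable def nnRank {α β : Type} [Fintype α] [Fintype β] (P : Matrix α β ℝ) : ℕ :=
  sInf {r | ∃ (u : Fin r → α → ℝ) (v : Fin r → β → ℝ),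
    (∀ l i, 0 ≤ u l i) ∧ (∀ l j, 0 ≤ v l j) ∧ ∀ i j, P i j = ∑ l, u l i * v l j}

/-- The `k`-fold Kronecker power of a square matrix, indexed by tuples:
`(kronPow Q k) x y = ∏ t, Q (x t) (y t)`. -/
def kronPow {n : ℕ} (Q : Matrix (Fin n) (Fin n) ℝ) (k : ℕ) :
    Matrix (Fin k → Fin n) (Fin k → Fin n) ℝ :=
  Matrix.of fun x y => ∏ t, Q (x t) (y t)

/-!
Write every term in Gram form `P x y = ∑ p, ∑ q, ‖⟪a x p, b y q⟫‖ ^ 2`, with all vectors in a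
subspace of dimension `d = 2 ^ (k - 1)`, and induct on `k`. Since `Q` has zero diagonal, the block
of `P l` with rows and columns starting with `i` vanishes, so the span `A i` of the row vectors
of that block is orthogonal to the span `B i` of its column vectors and `dim A i + dim B i ≤ d`.
If `2 ^ r < n`, pigeonhole gives `i ≠ j` with `dim A i ≤ d / 2 ↔ dim A j ≤ d / 2` for every `l`,
so for every `l` either `dim A i ≤ d / 2` or `dim B j ≤ d / 2`. Projecting onto that span
compresses the `(i, j)` block of `P l` to dimension `d / 2`, and these blocks, divided by
`Q i j`, decompose `Q^{⊗(k-1)}`. At `k = 1` the terms have rank one, so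
`2 √n - 2 ≤ rank₊ Q ≤ r`, which forces `n ≤ 2 ^ r`.
-/

open Module
open scoped InnerProductSpace

lemma Submodule.finrank_add_finrank_le_of_isOrtho {𝕜 E : Type*} [RCLike 𝕜]
    [NormedAddCommGroup E] [InnerProductSpace 𝕜 E] {K L V : Submodule 𝕜 E}
    [FiniteDimensional 𝕜 V] (hKL : K ⟂ L) (hK : K ≤ V) (hL : L ≤ V) :
    finrank 𝕜 K + finrank 𝕜 L ≤ finrank 𝕜 V := by
  rw [← Submodule.finrank_add_inf_finrank_orthogonal hK]
  have : FiniteDimensional 𝕜 ↥(Kᗮ ⊓ V) := Submodule.finiteDimensional_of_le inf_le_right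
  exact Nat.add_le_add_left (Submodule.finrank_mono (le_inf hKL.symm.le hL)) _

lemma trace_gram_mul_gram {ι κ : Type*} [Fintype ι] [Fintype κ] (A B : Matrix ι κ ℂ) :
    (Aᴴ * A * (Bᴴ * B)).trace =
      ((∑ p, ∑ q, ‖⟪WithLp.toLp 2 (A p), WithLp.toLp 2 (B q)⟫_ℂ‖ ^ 2 : ℝ) : ℂ) := by
  have hcycle : (Aᴴ * A * (Bᴴ * B)).trace = ((A * Bᴴ) * (B * Aᴴ)).trace := by
    rw [Matrix.mul_assoc, Matrix.trace_mul_comm, Matrix.mul_assoc, Matrix.mul_assoc,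
      Matrix.mul_assoc]
  have hentry p q : (B * Aᴴ) q p = ⟪WithLp.toLp 2 (A p), WithLp.toLp 2 (B q)⟫_ℂ := by
    simp [EuclideanSpace.inner_toLp_toLp, Matrix.mul_apply, dotProduct]
  rw [hcycle, ← Matrix.conjTranspose_conjTranspose (A * Bᴴ), Matrix.conjTranspose_mul,
    Matrix.conjTranspose_conjTranspose]
  simp only [Matrix.trace, Matrix.diag, Matrix.mul_apply, Matrix.conjTranspose_apply, hentry]
  push_cast
  simp only [RCLike.star_def, Complex.conj_mul']

lemma Matrix.PosSemidef.exists_eq_conjTranspose_mul_self {𝕜 ι : Type*} [RCLike 𝕜] [Fintype ι]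
    [DecidableEq ι] {M : Matrix ι ι 𝕜} (hM : M.PosSemidef) : ∃ B, M = Bᴴ * B := by
  open scoped MatrixOrder in
  exact CStarAlgebra.nonneg_iff_eq_star_mul_self.mp hM.nonneg

section InnerSqSum

variable {α β : Type} {E : Type*} [NormedAddCommGroup E] [InnerProductSpace ℂ E] {s : ℕ}

noncomputable def innerSqSum (a : α → Fin s → E) (b : β → Fin s → E) : Matrix α β ℝ :=
  Matrix.of fun x y => ∑ p, ∑ q, ‖⟪a x p, b y q⟫_ℂ‖ ^ 2

lemma innerSqSum_nonneg (a : α → Fin s → E) (b : β → Fin s → E) (x : α) (y : β) :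
    0 ≤ innerSqSum a b x y := by
  simp only [innerSqSum, Matrix.of_apply]
  positivity

lemma innerSqSum_eq_zero_iff {a : α → Fin s → E} {b : β → Fin s → E} {x : α} {y : β} :
    innerSqSum a b x y = 0 ↔ ∀ p q, ⟪a x p, b y q⟫_ℂ = 0 := by
  simp only [innerSqSum, Matrix.of_apply]
  rw [Finset.sum_eq_zero_iff_of_nonneg fun _ _ => Finset.sum_nonneg fun _ _ => sq_nonneg _]
  simp [Finset.sum_eq_zero_iff_of_nonneg]

lemma innerSqSum_smul_right (a : α → Fin s → E) (b : β → Fin s → E) {c : ℝ} (hc : 0 ≤ c) :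
    innerSqSum a (fun y q => (Real.sqrt c : ℂ) • b y q) = c • innerSqSum a b := by
  ext x y
  simp [innerSqSum, mul_pow, Finset.mul_sum, Real.sq_sqrt hc]

lemma innerSqSum_starProjection_right (W : Submodule ℂ E) [W.HasOrthogonalProjection]
    {a : α → Fin s → E} (ha : ∀ x p, a x p ∈ W) (b : β → Fin s → E) :
    innerSqSum a (fun y q => W.starProjection (b y q)) = innerSqSum a b := by
  ext x y
  simp only [innerSqSum, Matrix.of_apply, ← W.inner_starProjection_left_eq_right,
    W.starProjection_eq_self_iff.mpr (ha _ _)]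

lemma innerSqSum_starProjection_left (W : Submodule ℂ E) [W.HasOrthogonalProjection]
    (a : α → Fin s → E) {b : β → Fin s → E} (hb : ∀ y q, b y q ∈ W) :
    innerSqSum (fun x p => W.starProjection (a x p)) b = innerSqSum a b := by
  ext x y
  simp only [innerSqSum, Matrix.of_apply, W.inner_starProjection_left_eq_right,
    W.starProjection_eq_self_iff.mpr (hb _ _)]

lemma norm_inner_eq_norm_mul_norm_of_finrank_le_one {V : Submodule ℂ E}
    (hV : finrank ℂ V ≤ 1) [FiniteDimensional ℂ V] {u v : E} (hu : u ∈ V) (hv : v ∈ V) :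
    ‖⟪u, v⟫_ℂ‖ = ‖u‖ * ‖v‖ := by
  obtain ⟨e, he⟩ := finrank_le_one_iff.mp hV
  obtain ⟨c, hc⟩ := he ⟨u, hu⟩
  obtain ⟨d, hd⟩ := he ⟨v, hv⟩
  obtain rfl : c • (e : E) = u := congrArg Subtype.val hc
  obtain rfl : d • (e : E) = v := congrArg Subtype.val hd
  simp only [inner_smul_left, inner_smul_right, norm_smul, norm_mul, RCLike.norm_conj,
    inner_self_eq_norm_sq_to_K, Complex.coe_algebraMap, norm_pow, Complex.norm_real, norm_norm]
  ring

end InnerSqSum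

section HasGramFac

variable {α β : Type}

/- A PSD factorization `P x y = tr (C x * D y)` in Gram form `C x = ∑ p, a x p (a x p)ᴴ`,
`D y = ∑ q, b y q (b y q)ᴴ`. The dimension of a subspace `V` containing all the vectors replaces
the matrix size, so that compressing the factorization is a projection of one of the families. -/
def HasGramFac (P : Matrix α β ℝ) (d : ℕ) : Prop :=
  ∃ (N s : ℕ) (V : Submodule ℂ (EuclideanSpace ℂ (Fin N)))
    (a : α → Fin s → EuclideanSpace ℂ (Fin N)) (b : β → Fin s → EuclideanSpace ℂ (Fin N)),
    finrank ℂ V ≤ d ∧ (∀ x p, a x p ∈ V) ∧ (∀ y q, b y q ∈ V) ∧ P = innerSqSum a b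

namespace HasGramFac

variable {P : Matrix α β ℝ} {d : ℕ}

lemma nonneg (h : HasGramFac P d) (x : α) (y : β) : 0 ≤ P x y := by
  obtain ⟨N, s, V, a, b, -, -, -, rfl⟩ := h
  exact innerSqSum_nonneg a b x y

lemma mono (h : HasGramFac P d) {d' : ℕ} (hd : d ≤ d') : HasGramFac P d' := by
  obtain ⟨N, s, V, a, b, hV, ha, hb, rfl⟩ := h
  exact ⟨N, s, V, a, b, hV.trans hd, ha, hb, rfl⟩

lemma smul (h : HasGramFac P d) {c : ℝ} (hc : 0 ≤ c) : HasGramFac (c • P) d := by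
  obtain ⟨N, s, V, a, b, hV, ha, hb, rfl⟩ := h
  exact ⟨N, s, V, a, fun y q => (Real.sqrt c : ℂ) • b y q, hV, ha,
    fun y q => V.smul_mem _ (hb y q), (innerSqSum_smul_right a b hc).symm⟩

lemma exists_rankOne (h : HasGramFac P 1) :
    ∃ (u : α → ℝ) (v : β → ℝ), (∀ x, 0 ≤ u x) ∧ (∀ y, 0 ≤ v y) ∧ ∀ x y, P x y = u x * v y := by
  obtain ⟨N, s, V, a, b, hV, ha, hb, rfl⟩ := h
  refine ⟨fun x => ∑ p, ‖a x p‖ ^ 2, fun y => ∑ q, ‖b y q‖ ^ 2, fun x => by positivity,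
    fun y => by positivity, fun x y => ?_⟩
  simp only [innerSqSum, Matrix.of_apply, Finset.sum_mul_sum, ← mul_pow,
    norm_inner_eq_norm_mul_norm_of_finrank_le_one hV (ha _ _) (hb _ _)]

end HasGramFac

variable {N s : ℕ} (W : Submodule ℂ (EuclideanSpace ℂ (Fin N)))
  {a : α → Fin s → EuclideanSpace ℂ (Fin N)} {b : β → Fin s → EuclideanSpace ℂ (Fin N)}

lemma hasGramFac_innerSqSum_of_forall_mem_left (ha : ∀ x p, a x p ∈ W) :
    HasGramFac (innerSqSum a b) (finrank ℂ W) :=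
  ⟨N, s, W, a, fun y q => W.starProjection (b y q), le_rfl, ha,
    fun _ _ => W.starProjection_apply_mem _, (innerSqSum_starProjection_right W ha b).symm⟩

lemma hasGramFac_innerSqSum_of_forall_mem_right (hb : ∀ y q, b y q ∈ W) :
    HasGramFac (innerSqSum a b) (finrank ℂ W) :=
  ⟨N, s, W, fun x p => W.starProjection (a x p), b, le_rfl,
    fun _ _ => W.starProjection_apply_mem _, hb, (innerSqSum_starProjection_left W a hb).symm⟩

end HasGramFac

lemma HasPsdFac.hasGramFac {α β : Type} [Fintype α] [Fintype β] {P : Matrix α β ℝ} {m : ℕ}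
    (h : HasPsdFac P m) : HasGramFac P m := by
  obtain ⟨C, D, hC, hD, hfac⟩ := h
  choose A hA using fun x => (hC x).exists_eq_conjTranspose_mul_self
  choose B hB using fun y => (hD y).exists_eq_conjTranspose_mul_self
  refine ⟨m, m, ⊤, fun x p => WithLp.toLp 2 (A x p), fun y q => WithLp.toLp 2 (B y q),
    by simp, fun _ _ => Submodule.mem_top, fun _ _ => Submodule.mem_top, ?_⟩
  ext x y
  have hxy := hfac x y
  rw [hA, hB, trace_gram_mul_gram] at hxy
  exact_mod_cast hxy

lemma hasPsdFac_card_of_nonneg {α β : Type} [Fintype α] [Fintype β] {P : Matrix α β ℝ}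
    (hP : ∀ x y, 0 ≤ P x y) : HasPsdFac P (Fintype.card α) := by
  classical
  let e := Fintype.equivFin α
  refine ⟨fun x => diagonal (Pi.single (e x) 1), fun y => diagonal fun s => (P (e.symm s) y : ℂ),
    fun x => ?_, fun y => ?_, fun x y => ?_⟩
  · refine posSemidef_diagonal_iff.mpr fun s => ?_
    rcases eq_or_ne s (e x) with rfl | hs <;> simp [*]
  · exact posSemidef_diagonal_iff.mpr fun s => by exact_mod_cast hP _ _
  · simp [Pi.single_apply]

lemma hasPsdFac_prank {α β : Type} [Fintype α] [Fintype β] {P : Matrix α β ℝ}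
    (hP : ∀ x y, 0 ≤ P x y) : HasPsdFac P (prank P) :=
  Nat.sInf_mem (s := {r | HasPsdFac P r}) ⟨_, hasPsdFac_card_of_nonneg hP⟩

open Submodule in
lemma HasGramFac.exists_forall_eq_submatrix {ι α α' β β' : Type} {P : Matrix α β ℝ} {d : ℕ}
    (hP : HasGramFac P (2 * d)) (f : ι → α' → α) (g : ι → β' → β)
    (hzero : ∀ i x y, P (f i x) (g i y) = 0) :
    ∃ τ : ι → Bool, ∀ i j, τ i = τ j → HasGramFac (P.submatrix (f i) (g j)) d := by
  obtain ⟨N, s, V, a, b, hV, ha, hb, rfl⟩ := hP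
  let A i : Submodule ℂ (EuclideanSpace ℂ (Fin N)) :=
    span ℂ (Set.range fun z : α' × Fin s => a (f i z.1) z.2)
  let B i : Submodule ℂ (EuclideanSpace ℂ (Fin N)) :=
    span ℂ (Set.range fun z : β' × Fin s => b (g i z.1) z.2)
  have hA i x p : a (f i x) p ∈ A i := subset_span ⟨(x, p), rfl⟩
  have hB i y q : b (g i y) q ∈ B i := subset_span ⟨(y, q), rfl⟩
  -- the vanishing diagonal block makes `A i` and `B i` orthogonal inside `V`
  have hdim i : finrank ℂ (A i) + finrank ℂ (B i) ≤ 2 * d := by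
    refine (finrank_add_finrank_le_of_isOrtho ?_ (span_le.2 ?_) (span_le.2 ?_)).trans hV
    · refine isOrtho_span.2 ?_
      rintro _ ⟨⟨x, p⟩, rfl⟩ _ ⟨⟨y, q⟩, rfl⟩
      exact innerSqSum_eq_zero_iff.1 (hzero i x y) p q
    · rintro _ ⟨⟨x, p⟩, rfl⟩
      exact ha _ _
    · rintro _ ⟨⟨y, q⟩, rfl⟩
      exact hb _ _
  refine ⟨fun i => decide (finrank ℂ (A i) ≤ d), fun i j hij => ?_⟩
  by_cases hi : finrank ℂ (A i) ≤ d
  · exact (hasGramFac_innerSqSum_of_forall_mem_left (A i) (hA i)).mono hi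
  · have hj : ¬ finrank ℂ (A j) ≤ d := by simpa [hi] using hij
    exact (hasGramFac_innerSqSum_of_forall_mem_right (B j) (hB j)).mono (by have := hdim j; omega)

section KronPow

variable {n : ℕ} (Q : Matrix (Fin n) (Fin n) ℝ)

lemma kronPow_one_apply (i j : Fin n) : kronPow Q 1 (fun _ => i) (fun _ => j) = Q i j := by
  simp [kronPow]

lemma kronPow_succ_cons_cons {k : ℕ} (i j : Fin n) (x y : Fin k → Fin n) :
    kronPow Q (k + 1) (Fin.cons i x) (Fin.cons j y) = Q i j * kronPow Q k x y := by
  simp [kronPow, Fin.prod_univ_succ]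

variable {Q}

theorem nnRank_le_of_kronPow_eq_sum (hdiag : ∀ i, Q i i = 0)
    (hoff : ∀ i j, i ≠ j → 0 < Q i j) {k r : ℕ} (hk : 1 ≤ k) (hr : 2 ^ r < n)
    (P : Fin r → Matrix (Fin k → Fin n) (Fin k → Fin n) ℝ)
    (hP : ∀ l, HasGramFac (P l) (2 ^ (k - 1))) (hsum : kronPow Q k = ∑ l, P l) :
    nnRank Q ≤ r := by
  induction k, hk using Nat.le_induction with
  | base =>
    choose u v hu hv huv using fun l => (hP l).exists_rankOne
    refine Nat.sInf_le ⟨fun l i => u l fun _ => i, fun l j => v l fun _ => j,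
      fun l i => hu l _, fun l j => hv l _, fun i j => ?_⟩
    rw [← kronPow_one_apply Q, hsum, Matrix.sum_apply]
    exact Finset.sum_congr rfl fun l _ => huv l _ _
  | succ k hk ih =>
    have hzero l i x y : P l (Fin.cons i x) (Fin.cons i y) = 0 := by
      have hsum_zero : ∑ l, P l (Fin.cons i x) (Fin.cons i y) = 0 := by
        rw [← Matrix.sum_apply, ← hsum, kronPow_succ_cons_cons, hdiag, zero_mul]
      exact (Finset.sum_eq_zero_iff_of_nonneg fun l _ => (hP l).nonneg _ _).1 hsum_zero l
        (Finset.mem_univ l)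
    have hpow : 2 ^ (k + 1 - 1) = 2 * 2 ^ (k - 1) := by
      rw [Nat.add_sub_cancel, ← pow_succ', Nat.sub_add_cancel hk]
    choose τ hτ using fun l =>
      ((hP l).mono hpow.le).exists_forall_eq_submatrix (Fin.cons (α := fun _ => Fin n))
        (Fin.cons (α := fun _ => Fin n)) (hzero l)
    -- pigeonhole on the `2 ^ r` possible patterns `l ↦ τ l i`
    obtain ⟨i, j, hij, hτij⟩ :=
      Fintype.exists_ne_map_eq_of_card_lt (fun i l => τ l i) (by simpa using hr)
    refine ih (fun l => (Q i j)⁻¹ • (P l).submatrix (Fin.cons i) (Fin.cons j))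
      (fun l => (hτ l i j (congrFun hτij l)).smul (inv_nonneg.2 (hoff i j hij).le)) ?_
    ext x y
    have hblock := congrFun (congrFun hsum (Fin.cons i x)) (Fin.cons j y)
    rw [kronPow_succ_cons_cons, Matrix.sum_apply] at hblock
    simp [Matrix.sum_apply, ← Finset.mul_sum, ← hblock, (hoff i j hij).ne']

end KronPow

lemma sq_add_four_le_sixteen_mul_two_pow (r : ℕ) : (r + 4) ^ 2 ≤ 16 * 2 ^ r := by
  induction r with
  | zero => norm_num
  | succ r ih =>
    calc (r + 1 + 4) ^ 2 ≤ 2 * (r + 4) ^ 2 := by ring_nf; omega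
      _ ≤ 16 * 2 ^ (r + 1) := by rw [pow_succ 2 r]; omega

lemma le_two_pow_of_four_mul_le_sq {n r : ℕ} (h : 4 * n ≤ (r + 2) ^ 2) : n ≤ 2 ^ r := by
  match r, h with
  | 0, h => omega
  | 1, h => omega
  | r + 2, h =>
    have := sq_add_four_le_sixteen_mul_two_pow r
    rw [pow_add]
    nlinarith

lemma le_two_pow_of_two_mul_sqrt_sub_two_le {n r : ℕ} (h : 2 * √(n : ℝ) - 2 ≤ r) :
    n ≤ 2 ^ r := by
  refine le_two_pow_of_four_mul_le_sq ?_
  have hsq : (2 * √(n : ℝ)) ^ 2 ≤ ((r : ℝ) + 2) ^ 2 :=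
    pow_le_pow_left₀ (by positivity) (by linarith) 2
  rw [mul_pow, Real.sq_sqrt n.cast_nonneg] at hsq
  exact_mod_cast (by push_cast; linarith : ((4 * n : ℕ) : ℝ) ≤ (((r + 2) ^ 2 : ℕ) : ℝ))

theorem stmt8_general {n : ℕ}
    (Q : Matrix (Fin n) (Fin n) ℝ)
    (hdiag : ∀ i, Q i i = 0) (hoff : ∀ i j, i ≠ j → 0 < Q i j)
    (hnnr : 2 * Real.sqrt n - 2 ≤ (nnRank Q : ℝ))
    (k : ℕ) (hk : 2 ≤ k)
    (r : ℕ) (P : Fin r → Matrix (Fin k → Fin n) (Fin k → Fin n) ℝ)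
    (hPnn : ∀ l x y, 0 ≤ P l x y) (hPrank : ∀ l, prank (P l) ≤ 2 ^ (k - 1))
    (hsum : kronPow Q k = ∑ l, P l) :
    Real.logb 2 n ≤ (r : ℝ) := by
  have hP l : HasGramFac (P l) (2 ^ (k - 1)) :=
    (hasPsdFac_prank (hPnn l)).hasGramFac.mono (hPrank l)
  have hnr : n ≤ 2 ^ r := by
    by_contra! hr
    have hrank := nnRank_le_of_kronPow_eq_sum hdiag hoff (by omega) hr P hP hsum
    exact hr.not_ge (le_two_pow_of_two_mul_sqrt_sub_two_le (hnnr.trans (by exact_mod_cast hrank)))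
  rcases n.eq_zero_or_pos with rfl | hn
  · simp
  calc Real.logb 2 n ≤ Real.logb 2 (2 ^ r) :=
        Real.logb_le_logb_of_le one_lt_two (by exact_mod_cast hn) (by exact_mod_cast hnr)
    _ = r := by simp [Real.logb_pow]

theorem stmt8 {n : ℕ} (hn : 64 ≤ n)
    (Q : Matrix (Fin n) (Fin n) ℝ)
    (hdiag : ∀ i, Q i i = 0) (hoff : ∀ i j, i ≠ j → 0 < Q i j)
    (hnnr : 2 * Real.sqrt n - 2 ≤ (nnRank Q : ℝ))
    (k : ℕ) (hk : 2 ≤ k)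
    (r : ℕ) (P : Fin r → Matrix (Fin k → Fin n) (Fin k → Fin n) ℝ)
    (hPnn : ∀ l x y, 0 ≤ P l x y) (hPrank : ∀ l, prank (P l) ≤ 2 ^ (k - 1))
    (hsum : kronPow Q k = ∑ l, P l) :
    Real.logb 2 n ≤ (r : ℝ) :=
  stmt8_general Q hdiag hoff hnnr k hk r P hPnn hPrank hsum
end

section
/- Let A ∈ ℝ_{≥0}^{n₁×m₁} and B ∈ ℝ_{≥0}^{n₂×m₂} be nonnegative matrices and let C ∈ ℝ_{≥0}^{n₁×m₂} be any nonnegative matrix. Then the block matrix M = [[A, C],[0, B]] (with the zero block of size n₂×m₁) satisfies prank(M) ≥ prank(A) + prank(B). In particular, if prank(A) = prank(B) = 2 then prank(M) ≥ 4. -/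
open Matrix BigOperators Kronecker
open scoped ComplexOrder

/-!
Take an optimal PSD factorization `M i j = tr (E i * F j)` of `M = fromBlocks A C 0 B`.
Each entry of the zero block pairs two PSD matrices with `tr (E F) = 0`, which forces `E F = 0`
(write `E = Xᴴ X`, `F = Yᴴ Y`; then `tr ((Y Xᴴ)ᴴ (Y Xᴴ)) = 0`). Hence the span `V` of the ranges
of the `F`'s of the left columns is orthogonal to the span `W` of the ranges of the `E`'s of the
bottom rows, so `dim V + dim W ≤ prank M`. Compressing the factorization by an isometry onto `V`
factorizes `A` with matrices of size `dim V`; compressing onto `W` factorizes `Bᵀ`, hence `B`,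
with size `dim W`.
-/

open scoped MatrixOrder in
theorem Matrix.PosSemidef.mul_eq_zero_of_trace_mul_eq_zero {𝕜 n : Type*} [RCLike 𝕜] [Fintype n]
    [DecidableEq n] {E F : Matrix n n 𝕜} (hE : E.PosSemidef) (hF : F.PosSemidef)
    (h : (E * F).trace = 0) : E * F = 0 := by
  obtain ⟨X, rfl⟩ := CStarAlgebra.nonneg_iff_eq_star_mul_self.mp hE.nonneg
  obtain ⟨Y, rfl⟩ := CStarAlgebra.nonneg_iff_eq_star_mul_self.mp hF.nonneg
  simp only [star_eq_conjTranspose] at h ⊢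
  have hYX : Y * Xᴴ = 0 := by
    rw [← trace_conjTranspose_mul_self_eq_zero_iff, ← h, conjTranspose_mul,
      conjTranspose_conjTranspose, ← Matrix.mul_assoc, trace_mul_comm, ← Matrix.mul_assoc,
      ← Matrix.mul_assoc, Matrix.mul_assoc]
  calc Xᴴ * X * (Yᴴ * Y) = Xᴴ * (Y * Xᴴ)ᴴ * Y := by
        simp only [conjTranspose_mul, conjTranspose_conjTranspose, Matrix.mul_assoc]
    _ = 0 := by rw [hYX, conjTranspose_zero, Matrix.mul_zero, Matrix.zero_mul]

theorem Matrix.isOrtho_range_toEuclideanLin {𝕜 m n p : Type*} [RCLike 𝕜] [Fintype m]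
    [Fintype n] [Fintype p] [DecidableEq m] [DecidableEq n] [DecidableEq p]
    {X : Matrix m n 𝕜} {Y : Matrix m p 𝕜} (h : Xᴴ * Y = 0) :
    LinearMap.range (toEuclideanLin X) ⟂ LinearMap.range (toEuclideanLin Y) := by
  rw [Submodule.isOrtho_iff_inner_eq]
  rintro _ ⟨x, rfl⟩ _ ⟨y, rfl⟩
  rw [← LinearMap.adjoint_inner_right, ← toEuclideanLin_conjTranspose_eq_adjoint,
    ← LinearMap.comp_apply, ← toLpLin_mul_same, h, map_zero, LinearMap.zero_apply,
    inner_zero_right]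

theorem Submodule.exists_toEuclideanLin_mul_conjTranspose_apply_eq {𝕜 n : Type*} [RCLike 𝕜]
    [Fintype n] [DecidableEq n] (V : Submodule 𝕜 (EuclideanSpace 𝕜 n)) :
    ∃ U : Matrix n (Fin (Module.finrank 𝕜 V)) 𝕜, ∀ v ∈ V, toEuclideanLin (U * Uᴴ) v = v := by
  let b := stdOrthonormalBasis 𝕜 V
  let ι := V.subtypeₗᵢ.comp b.repr.symm.toLinearIsometry
  refine ⟨toEuclideanLin.symm ι.toLinearMap, fun v hv => ?_⟩
  obtain ⟨w, rfl⟩ : ∃ w, ι w = v := ⟨b.repr ⟨v, hv⟩, by simp [ι]⟩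
  rw [toLpLin_mul_same, toEuclideanLin_conjTranspose_eq_adjoint, LinearEquiv.apply_symm_apply,
    LinearMap.comp_apply]
  exact congrArg ι (LinearMap.congr_fun ι.adjoint_comp_self' w)

section PsdFactorization

variable {α β : Type} [Fintype α] [Fintype β] {P : Matrix α β ℝ} {r : ℕ}

theorem HasPsdFac.transpose (h : HasPsdFac P r) : HasPsdFac Pᵀ r := by
  obtain ⟨C, D, hC, hD, hP⟩ := h
  exact ⟨D, C, hD, hC, fun j i => by rw [transpose_apply, hP, trace_mul_comm]⟩

theorem hasPsdFac_card_of_nonneg_s11 (hP : ∀ i j, 0 ≤ P i j) : HasPsdFac P (Fintype.card α) := by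
  classical
  let e := Fintype.equivFin α
  refine ⟨fun i => diagonal (Pi.single (e i) 1),
    fun j => diagonal fun k => (P (e.symm k) j : ℂ), fun i => ?_, fun j => ?_, fun i j => ?_⟩
  · rw [posSemidef_diagonal_iff]
    intro k
    by_cases hk : k = e i <;> simp [hk]
  · rw [posSemidef_diagonal_iff]
    exact fun k => Complex.zero_le_real.mpr (hP _ j)
  · simp [diagonal_mul_diagonal, trace_diagonal, Pi.single_apply]

-- Nonnegativity makes the set nonempty, ruling out the junk value `sInf ∅ = 0`.
theorem hasPsdFac_prank_s11 (hP : ∀ i j, 0 ≤ P i j) : HasPsdFac P (prank P) :=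
  Nat.sInf_mem (s := {r | HasPsdFac P r}) ⟨_, hasPsdFac_card_of_nonneg_s11 hP⟩

theorem HasPsdFac.prank_le (h : HasPsdFac P r) : prank P ≤ r :=
  Nat.sInf_le h

theorem hasPsdFac_of_mul_conjTranspose_mul_eq {a : ℕ} {C : α → Matrix (Fin r) (Fin r) ℂ}
    {D : β → Matrix (Fin r) (Fin r) ℂ} (hC : ∀ i, (C i).PosSemidef) (hD : ∀ j, (D j).PosSemidef)
    (hP : ∀ i j, (P i j : ℂ) = (C i * D j).trace) (U : Matrix (Fin r) (Fin a) ℂ)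
    (hU : ∀ j, U * Uᴴ * D j = D j) : HasPsdFac P a := by
  have hU' : ∀ j, D j * (U * Uᴴ) = D j := fun j => by
    simpa [(hD j).isHermitian.eq, Matrix.mul_assoc] using congrArg conjTranspose (hU j)
  refine ⟨fun i => Uᴴ * C i * U, fun j => Uᴴ * D j * U,
    fun i => (hC i).conjTranspose_mul_mul_same U, fun j => (hD j).conjTranspose_mul_mul_same U,
    fun i j => ?_⟩
  calc (P i j : ℂ) = (C i * (U * Uᴴ * D j * (U * Uᴴ))).trace := by rw [hU, hU', hP]
    _ = (Uᴴ * (C i * U * (Uᴴ * D j * U))).trace := by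
        rw [trace_mul_comm Uᴴ]; simp only [Matrix.mul_assoc]
    _ = _ := by simp only [Matrix.mul_assoc]

theorem hasPsdFac_finrank_of_range_le {C : α → Matrix (Fin r) (Fin r) ℂ}
    {D : β → Matrix (Fin r) (Fin r) ℂ} (hC : ∀ i, (C i).PosSemidef) (hD : ∀ j, (D j).PosSemidef)
    (hP : ∀ i j, (P i j : ℂ) = (C i * D j).trace) (V : Submodule ℂ (EuclideanSpace ℂ (Fin r)))
    (hV : ∀ j, LinearMap.range (toEuclideanLin (D j)) ≤ V) :
    HasPsdFac P (Module.finrank ℂ V) := by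
  obtain ⟨U, hU⟩ := V.exists_toEuclideanLin_mul_conjTranspose_apply_eq
  refine hasPsdFac_of_mul_conjTranspose_mul_eq hC hD hP U fun j => toEuclideanLin.injective ?_
  ext1 x
  rw [toLpLin_mul_same, LinearMap.comp_apply]
  exact hU _ (hV j (LinearMap.mem_range_self _ x))

end PsdFactorization

theorem HasPsdFac.exists_add_le_of_fromBlocks {α₁ α₂ β₁ β₂ : Type} [Fintype α₁] [Fintype α₂]
    [Fintype β₁] [Fintype β₂] {A : Matrix α₁ β₁ ℝ} {B : Matrix α₂ β₂ ℝ} {C : Matrix α₁ β₂ ℝ}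
    {r : ℕ} (h : HasPsdFac (fromBlocks A C 0 B) r) :
    ∃ a b, HasPsdFac A a ∧ HasPsdFac B b ∧ a + b ≤ r := by
  obtain ⟨E, F, hE, hF, hM⟩ := h
  let V := ⨆ j, LinearMap.range (toEuclideanLin (F (.inl j)))
  let W := ⨆ i, LinearMap.range (toEuclideanLin (E (.inr i)))
  have hVW : V ⟂ W := by
    refine Submodule.isOrtho_iSup_left.mpr fun j => Submodule.isOrtho_iSup_right.mpr fun i => ?_
    refine isOrtho_range_toEuclideanLin ?_
    rw [(hF _).isHermitian.eq]
    refine (hF _).mul_eq_zero_of_trace_mul_eq_zero (hE _) ?_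
    rw [trace_mul_comm, ← hM (.inr i) (.inl j)]
    simp
  refine ⟨Module.finrank ℂ V, Module.finrank ℂ W, ?_, ?_, ?_⟩
  · exact hasPsdFac_finrank_of_range_le (fun i => hE _) (fun j => hF _)
      (fun i j => by simpa using hM (.inl i) (.inl j)) V
      fun j => le_iSup (fun k => LinearMap.range (toEuclideanLin (F (.inl k)))) j
  · have hBt : HasPsdFac Bᵀ (Module.finrank ℂ W) :=
      hasPsdFac_finrank_of_range_le (fun j => hF _) (fun i => hE _)
        (fun j i => by rw [trace_mul_comm, ← hM (.inr i) (.inr j)]; simp) W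
        fun i => le_iSup (fun k => LinearMap.range (toEuclideanLin (E (.inr k)))) i
    simpa using hBt.transpose
  · simpa using Submodule.finrank_add_finrank_le_of_disjoint hVW.disjoint

theorem stmt11 {n₁ m₁ n₂ m₂ : ℕ}
    (A : Matrix (Fin n₁) (Fin m₁) ℝ) (hA : ∀ i j, 0 ≤ A i j)
    (B : Matrix (Fin n₂) (Fin m₂) ℝ) (hB : ∀ i j, 0 ≤ B i j)
    (C : Matrix (Fin n₁) (Fin m₂) ℝ) (hC : ∀ i j, 0 ≤ C i j) :
    prank A + prank B ≤ prank (Matrix.fromBlocks A C 0 B) ∧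
      (prank A = 2 → prank B = 2 → 4 ≤ prank (Matrix.fromBlocks A C 0 B)) := by
  have hM : ∀ i j, 0 ≤ fromBlocks A C 0 B i j := by
    rintro (i | i) (j | j)
    exacts [hA i j, hC i j, le_rfl, hB i j]
  obtain ⟨a, b, hAa, hBb, hab⟩ := (hasPsdFac_prank_s11 hM).exists_add_le_of_fromBlocks
  have hsum : prank A + prank B ≤ prank (fromBlocks A C 0 B) :=
    (add_le_add hAa.prank_le hBb.prank_le).trans hab
  exact ⟨hsum, fun hA2 hB2 => by omega⟩
end
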